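/- Let Q₁, Q₁', Q₂, Q₂' : ℝ⁹ → ℝ⁹ and g₁, g₂, g₃, g₄ ∈ ℝ⁹ be as in the context, and let Ω be the smallest subset of ℝ⁹ containing g₁ and g₂ and closed under Q₁, Q₁', Q₂ and Q₂'. Then for all positive integers b, c with gcd(b,c) = 1, the vector b·g₃ + c·g₄ belongs to Ω. -/
import Mathlib


/-- The `max`-tropicalisation of the pullback action of `σ₁⁻¹` of `Gr(4,8)` on the
ŷ-variables of the initial seed, realizing the action of `σ₁` on g-vectors. -/
noncomputable def Q1 : (Fin 9 → ℝ) → (Fin 9 → ℝ) := fun v =>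
  ![-v 1 - max 0 (v 2),
    v 5 + max 0 (v 8) + max 0 (max (v 1) (v 1 + v 2))
      - max 0 (max (v 2) (max (v 2 + v 5) (v 2 + v 5 + v 8))),
    max 0 (v 2) - v 2 - v 5 - max 0 (v 8),
    v 0 + max 0 (v 3) + max 0 (max (v 1) (v 1 + v 2)),
    v 1 + v 3 + v 4 + v 8 + max 0 (v 2) - max 0 (v 3) - max 0 (v 8)
      - max 0 (max (v 1) (v 1 + v 2)),
    max 0 (max (v 2) (max (v 2 + v 5) (v 2 + v 5 + v 8))) - v 8 - max 0 (v 2),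
    v 3 + v 6 - max 0 (v 3),
    -v 3,
    v 7 + max 0 (v 3) + max 0 (v 8)]

/-- The `max`-tropicalisation of the pullback action of `σ₁` of `Gr(4,8)` on the
ŷ-variables of the initial seed, realizing the action of `σ₁⁻¹` on g-vectors. -/
noncomputable def Q1' : (Fin 9 → ℝ) → (Fin 9 → ℝ) := fun v =>
  ![v 0 + v 3 + v 7 - max 0 (v 0) - max 0 (v 7),
    v 1 + max 0 (v 2) - max 0 (max (v 0) (max (v 0 + v 1) (v 0 + v 1 + v 2))),
    max 0 (v 0) - v 0 - v 1 - max 0 (v 2),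
    -v 7,
    v 4 + max 0 (v 0) + max 0 (v 7) + max 0 (max (v 2) (v 2 + v 5)) - max 0 (v 2),
    v 5 + max 0 (max (v 0) (max (v 0 + v 1) (v 0 + v 1 + v 2))) - max 0 (v 0)
      - max 0 (max (v 2) (v 2 + v 5)),
    v 6 + max 0 (v 7),
    v 2 + v 5 + v 7 + v 8 - max 0 (v 7) - max 0 (max (v 2) (v 2 + v 5)),
    max 0 (v 2) - v 2 - v 5]

/-- The `max`-tropicalisation of the pullback action of `σ₂⁻¹` of `Gr(4,8)` on the
ŷ-variables of the initial seed, realizing the action of `σ₂` on g-vectors. -/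
noncomputable def Q2 : (Fin 9 → ℝ) → (Fin 9 → ℝ) := fun v =>
  ![v 0 + v 4 + max 0 (max (v 4) (max (v 4 + v 5) (max (v 4 + v 7) (v 4 + v 5 + v 7))))
      - max 0 (max (v 4) (v 4 + v 5)) - max 0 (max (v 4) (v 4 + v 7)),
    v 5 - max 0 (max (v 4) (max (v 4 + v 5) (max (v 4 + v 7) (v 4 + v 5 + v 7)))),
    v 1 + max 0 (max (v 4) (v 4 + v 7)),
    v 7 - max 0 (max (v 4) (max (v 4 + v 5) (max (v 4 + v 7) (v 4 + v 5 + v 7)))),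
    max 0 (max (v 4) (v 4 + v 5)) + max 0 (max (v 4) (v 4 + v 7)) - v 4 - v 5 - v 7,
    v 2 + max 0 (max (v 4) (max (v 4 + v 5) (max (v 4 + v 7) (v 4 + v 5 + v 7))))
      - max 0 (max (v 4) (v 4 + v 7)),
    v 3 + max 0 (max (v 4) (v 4 + v 5)),
    v 6 + max 0 (max (v 4) (max (v 4 + v 5) (max (v 4 + v 7) (v 4 + v 5 + v 7))))
      - max 0 (max (v 4) (v 4 + v 5)),
    v 4 + v 5 + v 7 + v 8
      - max 0 (max (v 4) (max (v 4 + v 5) (max (v 4 + v 7) (v 4 + v 5 + v 7))))]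

/-- The `max`-tropicalisation of the pullback action of `σ₂` of `Gr(4,8)` on the
ŷ-variables of the initial seed, realizing the action of `σ₂⁻¹` on g-vectors. -/
noncomputable def Q2' : (Fin 9 → ℝ) → (Fin 9 → ℝ) := fun v =>
  ![v 0 + max 0 (max (v 1) (max (v 3) (max (v 1 + v 3) (v 1 + v 3 + v 4)))),
    v 1 + v 2 + max 0 (max (v 3) (v 3 + v 4))
      - max 0 (max (v 1) (max (v 3) (max (v 1 + v 3) (v 1 + v 3 + v 4)))),
    v 3 + v 4 + v 5 - max 0 (max (v 3) (v 3 + v 4)),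
    v 3 + v 6 + max 0 (max (v 1) (v 1 + v 4))
      - max 0 (max (v 1) (max (v 3) (max (v 1 + v 3) (v 1 + v 3 + v 4)))),
    v 4 - max 0 (max (v 1) (v 1 + v 4)) - max 0 (max (v 3) (v 3 + v 4)),
    max 0 (max (v 1) (max (v 3) (max (v 1 + v 3) (v 1 + v 3 + v 4)))) - v 3 - v 4,
    v 1 + v 4 + v 7 - max 0 (max (v 1) (v 1 + v 4)),
    max 0 (max (v 1) (max (v 3) (max (v 1 + v 3) (v 1 + v 3 + v 4)))) - v 1 - v 4,
    v 8 + max 0 (max (v 1) (v 1 + v 4)) + max 0 (max (v 3) (v 3 + v 4))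
      - max 0 (max (v 1) (max (v 3) (max (v 1 + v 3) (v 1 + v 3 + v 4))))]

/-- The truncated g-vector of the stable fixed tableau `[[1,3],[2,5],[4,7],[6,8]]` of `σ₁`. -/
noncomputable def g1 : Fin 9 → ℝ := ![-1, 1, 0, 1, 0, -1, 0, -1, 1]

/-- The truncated g-vector of the stable fixed tableau `[[1,2],[3,4],[5,6],[7,8]]` of `σ₂`. -/
noncomputable def g2 : Fin 9 → ℝ := ![0, -1, 0, -1, 0, 1, 0, 1, 0]

/-- The g-vector `g₃ = σ₂⁻¹(g₁)`. -/
noncomputable def g3 : Fin 9 → ℝ := ![1, 0, -1, 0, -2, 1, -1, 1, 1]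

/-- The g-vector `g₄ = σ₁⁻¹(g₂)`. -/
noncomputable def g4 : Fin 9 → ℝ := ![-1, -1, 1, -1, 2, 0, 1, 0, -1]


@[simp] lemma cons_val_f5 {α : Type*} (a0 a1 a2 a3 a4 a5 a6 a7 a8 : α) :
  (![a0,a1,a2,a3,a4,a5,a6,a7,a8] : Fin 9 → α) (5 : Fin 9) = a5 := rfl

@[simp] lemma cons_val_f6 {α : Type*} (a0 a1 a2 a3 a4 a5 a6 a7 a8 : α) :
  (![a0,a1,a2,a3,a4,a5,a6,a7,a8] : Fin 9 → α) (6 : Fin 9) = a6 := rfl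

@[simp] lemma cons_val_f7 {α : Type*} (a0 a1 a2 a3 a4 a5 a6 a7 a8 : α) :
  (![a0,a1,a2,a3,a4,a5,a6,a7,a8] : Fin 9 → α) (7 : Fin 9) = a7 := rfl

@[simp] lemma cons_val_f8 {α : Type*} (a0 a1 a2 a3 a4 a5 a6 a7 a8 : α) :
  (![a0,a1,a2,a3,a4,a5,a6,a7,a8] : Fin 9 → α) (8 : Fin 9) = a8 := rfl

/-- `L b c = b • g₃ + c • g₄`. -/
noncomputable def L (b c : ℝ) : Fin 9 → ℝ := b • g3 + c • g4

set_option maxHeartbeats 2000000 in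
lemma Q1L (b c : ℝ) (hb : 0 ≤ b) (hbc : b ≤ c) : Q1 (L b c) = L c (c - b) := by
  funext i
  fin_cases i <;> simp [Q1, L, g3, g4, max_def] <;> split_ifs <;> linarith

set_option maxHeartbeats 2000000 in
lemma Q1pL (b c : ℝ) (hc : 0 ≤ c) (hcb : c ≤ b) : Q1' (L b c) = L (b - c) b := by
  funext i
  fin_cases i <;> simp [Q1', L, g3, g4, max_def] <;> split_ifs <;> linarith

set_option maxHeartbeats 2000000 in
lemma Q2L (b c : ℝ) (hb : 0 ≤ b) (hbc : b ≤ c) : Q2 (L b c) = L c (2*c - b) := by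
  funext i
  fin_cases i <;> simp [Q2, L, g3, g4, max_def] <;> split_ifs <;> linarith

set_option maxHeartbeats 2000000 in
lemma Q2pL (b c : ℝ) (hc : 0 ≤ c) (hcb : c ≤ b) : Q2' (L b c) = L (2*b - c) b := by
  funext i
  fin_cases i <;> simp [Q2', L, g3, g4, max_def] <;> split_ifs <;> linarith

lemma g2L : g2 = L 1 1 := by
  funext i
  fin_cases i <;> simp [g2, L, g3, g4] <;> norm_num

lemma step (Om : Set (Fin 9 → ℝ))
    (hQ1 : ∀ x ∈ Om, Q1 x ∈ Om) (hQ1' : ∀ x ∈ Om, Q1' x ∈ Om)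
    (hQ2 : ∀ x ∈ Om, Q2 x ∈ Om) (hQ2' : ∀ x ∈ Om, Q2' x ∈ Om)
    (b c : ℝ) (hb : 0 ≤ b) (hc : 0 ≤ c) (h : L b c ∈ Om) :
    L (b + c) c ∈ Om ∧ L b (b + c) ∈ Om := by
  rcases le_total b c with hbc | hcb
  · have h1 : L (b + c) c ∈ Om := by
      have h2 := hQ2' _ (hQ1 _ h)
      rw [Q1L b c hb hbc, Q2pL c (c - b) (by linarith) (by linarith),
        show 2*c - (c - b) = b + c by ring] at h2
      exact h2
    refine ⟨h1, ?_⟩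
    have h3 := hQ1' _ h1
    rwa [Q1pL (b + c) c hc (by linarith), show b + c - c = b by ring] at h3
  · have h1 : L b (b + c) ∈ Om := by
      have h2 := hQ2 _ (hQ1' _ h)
      rw [Q1pL b c hc hcb, Q2L (b - c) b (by linarith) (by linarith),
        show 2*b - (b - c) = b + c by ring] at h2
      exact h2
    refine ⟨?_, h1⟩
    have h3 := hQ1 _ h1
    rwa [Q1L b (b + c) hb (by linarith), show b + c - b = c by ring] at h3

/-- Every vector `b·g₃ + c·g₄` with `b, c` coprime positive integers lies in the
smallest subset of `ℝ⁹` containing `g₁` and `g₂` and closed under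
`Q₁, Q₁', Q₂, Q₂'`. -/
theorem stmt_13 (Ω : Set (Fin 9 → ℝ)) (hg1 : g1 ∈ Ω) (hg2 : g2 ∈ Ω)
    (hQ1 : ∀ x ∈ Ω, Q1 x ∈ Ω) (hQ1' : ∀ x ∈ Ω, Q1' x ∈ Ω)
    (hQ2 : ∀ x ∈ Ω, Q2 x ∈ Ω) (hQ2' : ∀ x ∈ Ω, Q2' x ∈ Ω)
    (b c : ℕ) (hb : 0 < b) (hc : 0 < c) (hbc : Nat.gcd b c = 1) :
    (b : ℝ) • g3 + (c : ℝ) • g4 ∈ Ω := by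
  suffices H : ∀ n : ℕ, ∀ b c : ℕ, b + c = n → 0 < b → 0 < c → Nat.gcd b c = 1 →
      L (b : ℝ) (c : ℝ) ∈ Ω from H (b + c) b c rfl hb hc hbc
  intro n
  induction n using Nat.strong_induction_on with
  | _ n ih =>
    intro b c hn hb hc hbc
    rcases lt_trichotomy b c with h | h | h
    · have hcb : 0 < c - b := by omega
      have hg : Nat.gcd b (c - b) = 1 :=
        (Nat.coprime_sub_self_right h.le).mpr hbc
      have hp := ih (b + (c - b)) (by omega) b (c - b) rfl hb hcb hg
      rw [show ((c - b : ℕ) : ℝ) = (c : ℝ) - b from Nat.cast_sub h.le] at hp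
      have hst := (step Ω hQ1 hQ1' hQ2 hQ2' (b : ℝ) ((c : ℝ) - b)
        (by positivity) (sub_nonneg.mpr (by exact_mod_cast h.le)) hp).2
      rwa [show (b : ℝ) + ((c : ℝ) - b) = (c : ℝ) by ring] at hst
    · subst h
      have hb1 : b = 1 := by
        have := Nat.gcd_self b; omega
      subst hb1
      rw [show ((1 : ℕ) : ℝ) = (1 : ℝ) from Nat.cast_one, ← g2L]
      exact hg2
    · have hcb : 0 < b - c := by omega
      have hg : Nat.gcd (b - c) c = 1 :=
        (Nat.coprime_sub_self_left h.le).mpr hbc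
      have hp := ih ((b - c) + c) (by omega) (b - c) c rfl hcb hc hg
      rw [show ((b - c : ℕ) : ℝ) = (b : ℝ) - c from Nat.cast_sub h.le] at hp
      have hst := (step Ω hQ1 hQ1' hQ2 hQ2' ((b : ℝ) - c) (c : ℝ)
        (sub_nonneg.mpr (by exact_mod_cast h.le)) (by positivity) hp).1
      rwa [show ((b : ℝ) - c) + (c : ℝ) = (b : ℝ) by ring] at hst
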